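/- Let a1, a2, a3, λ > 0. Then ∫_0^∞ f_GE(z2; a2, λ) · ( ∫_0^{z2} f_GE(z3; a3, λ) · (1−e^{−λ z3})^{a1} dz3 ) dz2 = a2 a3 / ( (a1+a3)(a1+a2+a3) ). (For independent random variables Z1 ~ GE(a1, λ), Z2 ~ GE(a2, λ), Z3 ~ GE(a3, λ), this is P(Z1 < Z3 < Z2); it yields the E-step probability u2 = α3/(α1+α3) in the EM algorithm.) -/

import Mathlib

/-! Both integrals integrate a GE density against a power of the GE cdf
`F_c(x) = (1 - e^{-λx})^c`. Since `F_c = F_1^c`, we have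
`f_GE(·; a, λ) F_b = a / (a + b) f_GE(·; a + b, λ)`, and `F_c` is an antiderivative of
`f_GE(·; c, λ)` vanishing at `0` and tending to `1` at `∞`. So the inner integral is
`a3 / (a1 + a3) F_{a1+a3}(z2)`, and the outer one is `a3 / (a1 + a3) · a2 / (a1 + a2 + a3)`
times the total mass of `f_GE(·; a1 + a2 + a3, λ)`, which is `1`. -/

open Real Filter MeasureTheory intervalIntegral

/-- The generalized exponential pdf `f_GE(x; α, λ) = α λ e^{-λx} (1-e^{-λx})^{α-1}`. -/
noncomputable def fGE (x α lam : ℝ) : ℝ :=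
  α * lam * Real.exp (-lam * x) * (1 - Real.exp (-lam * x)) ^ (α - 1)

noncomputable def geCDF (x α lam : ℝ) : ℝ :=
  (1 - Real.exp (-lam * x)) ^ α

section

variable {x α lam : ℝ}

lemma one_sub_exp_neg_mul_pos (hlam : 0 < lam) (hx : 0 < x) : 0 < 1 - Real.exp (-lam * x) := by
  have : Real.exp (-lam * x) < 1 := Real.exp_lt_one_iff.2 (by nlinarith)
  linarith

lemma fGE_nonneg (hα : 0 ≤ α) (hlam : 0 < lam) (hx : 0 < x) : 0 ≤ fGE x α lam := by
  have := one_sub_exp_neg_mul_pos hlam hx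
  unfold fGE
  positivity

lemma geCDF_zero (hα : α ≠ 0) : geCDF 0 α lam = 0 := by
  simp [geCDF, Real.zero_rpow hα]

lemma continuous_geCDF (hα : 0 ≤ α) : Continuous fun x => geCDF x α lam :=
  (by fun_prop : Continuous fun x => 1 - Real.exp (-lam * x)).rpow_const fun _ => Or.inr hα

lemma hasDerivAt_geCDF (hlam : 0 < lam) (hx : 0 < x) :
    HasDerivAt (fun y => geCDF y α lam) (fGE x α lam) x := by
  have hbase : HasDerivAt (fun y => 1 - Real.exp (-lam * y)) (lam * Real.exp (-lam * x)) x := by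
    have := ((hasDerivAt_id x).const_mul (-lam)).exp.const_sub 1
    exact this.congr_deriv (by simp only [id]; ring)
  refine (hbase.rpow_const (Or.inl (one_sub_exp_neg_mul_pos hlam hx).ne')).congr_deriv ?_
  unfold fGE
  ring

lemma tendsto_geCDF_atTop (hlam : 0 < lam) : Tendsto (fun x => geCDF x α lam) atTop (nhds 1) := by
  have hexp : Tendsto (fun x => Real.exp (-lam * x)) atTop (nhds 0) :=
    Real.tendsto_exp_atBot.comp (tendsto_id.const_mul_atTop_of_neg (neg_neg_of_pos hlam))
  have hbase : Tendsto (fun x => 1 - Real.exp (-lam * x)) atTop (nhds 1) := by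
    simpa using hexp.const_sub 1
  have := hbase.rpow_const (p := α) (Or.inl one_ne_zero)
  rwa [one_rpow] at this

end

lemma fGE_mul_geCDF {x a b lam : ℝ} (hlam : 0 < lam) (hx : 0 < x) (hab : a + b ≠ 0) :
    fGE x a lam * geCDF x b lam = a / (a + b) * fGE x (a + b) lam := by
  have hbase := one_sub_exp_neg_mul_pos hlam hx
  unfold fGE geCDF
  rw [show a + b - 1 = (a - 1) + b by ring, Real.rpow_add hbase]
  field_simp

lemma integral_fGE_of_nonneg {t c lam : ℝ} (hc : 0 < c) (hlam : 0 < lam) (ht : 0 ≤ t) :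
    ∫ z in (0 : ℝ)..t, fGE z c lam = geCDF t c lam := by
  have hcont : ∀ {s}, ContinuousOn (fun y => geCDF y c lam) s :=
    (continuous_geCDF hc.le).continuousOn
  have hderiv : ∀ z ∈ Set.Ioo (0 : ℝ) t, HasDerivAt (fun y => geCDF y c lam) (fGE z c lam) z :=
    fun z hz => hasDerivAt_geCDF hlam hz.1
  have hint : IntervalIntegrable (fun z => fGE z c lam) volume 0 t := by
    refine intervalIntegrable_deriv_of_nonneg hcont ?_ ?_ <;>
      rw [min_eq_left ht, max_eq_right ht]
    exacts [hderiv, fun z hz => fGE_nonneg hc.le hlam hz.1]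
  rw [integral_eq_sub_of_hasDerivAt_of_le ht hcont hderiv hint, geCDF_zero hc.ne', sub_zero]

lemma integral_Ioi_fGE {c lam : ℝ} (hc : 0 < c) (hlam : 0 < lam) :
    ∫ z in Set.Ioi (0 : ℝ), fGE z c lam = 1 := by
  rw [integral_Ioi_of_hasDerivAt_of_nonneg (continuous_geCDF hc.le).continuousWithinAt
    (fun z hz => hasDerivAt_geCDF hlam hz) (fun z hz => fGE_nonneg hc.le hlam hz)
    (tendsto_geCDF_atTop hlam), geCDF_zero hc.ne', sub_zero]

lemma integral_fGE_mul_geCDF {t a b lam : ℝ} (hab : 0 < a + b) (hlam : 0 < lam) (ht : 0 ≤ t) :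
    ∫ z in (0 : ℝ)..t, fGE z a lam * geCDF z b lam = a / (a + b) * geCDF t (a + b) lam := by
  rw [integral_congr_ae (ae_of_all _ fun z hz => fGE_mul_geCDF hlam
      (by rw [Set.uIoc_of_le ht] at hz; exact hz.1) hab.ne'),
    intervalIntegral.integral_const_mul, integral_fGE_of_nonneg hab hlam ht]

/-- For independent `Z1 ~ GE(a1,λ)`, `Z2 ~ GE(a2,λ)`, `Z3 ~ GE(a3,λ)`:
`P(Z1 < Z3 < Z2) = ∫_0^∞ f_GE(z2; a2, λ) (∫_0^{z2} f_GE(z3; a3, λ)(1-e^{-λ z3})^{a1} dz3) dz2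
  = a2 a3 / ((a1+a3)(a1+a2+a3))`. -/
theorem stmt_17 (a1 a2 a3 lam : ℝ) (ha1 : 0 < a1) (ha2 : 0 < a2) (ha3 : 0 < a3)
    (hlam : 0 < lam) :
    ∫ z2 in Set.Ioi (0 : ℝ),
        fGE z2 a2 lam *
          ∫ z3 in (0 : ℝ)..z2, fGE z3 a3 lam * (1 - Real.exp (-lam * z3)) ^ a1 =
      a2 * a3 / ((a1 + a3) * (a1 + a2 + a3)) := by
  have hinner : ∀ z ∈ Set.Ioi (0 : ℝ),
      fGE z a2 lam * ∫ z3 in (0 : ℝ)..z, fGE z3 a3 lam * (1 - Real.exp (-lam * z3)) ^ a1 =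
        a3 / (a1 + a3) * (a2 / (a1 + a2 + a3)) * fGE z (a1 + a2 + a3) lam := by
    intro z hz
    change fGE z a2 lam * ∫ z3 in (0 : ℝ)..z, fGE z3 a3 lam * geCDF z3 a1 lam = _
    rw [integral_fGE_mul_geCDF (by positivity) hlam (le_of_lt hz), mul_left_comm,
      fGE_mul_geCDF hlam hz (by positivity), show a2 + (a3 + a1) = a1 + a2 + a3 by ring]
    ring
  rw [setIntegral_congr_fun measurableSet_Ioi hinner, MeasureTheory.integral_const_mul,
    integral_Ioi_fGE (by positivity) hlam]
  field_simp
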